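/- For every sample size m ≥ 1 and all data 0 < z_1 < … < z_m, the MDI prior for the Generalized Pareto distribution, corresponding to π(ξ) = e^{−ξ} for ξ ∈ ℝ, yields an improper posterior: the GP posterior normalizing constant C_m(e^{−ξ}; z) = +∞. -/

import Mathlib

/-!
For `ξ ≤ -1` every factor `(1 + ξ z_i/σ)^{-(1+1/ξ)}` is at least `1` on the range
`σ > -ξ z_m` of the inner integral, so that integral is at least
`∫_a^{2a} σ^{-(m+1)} dσ ≥ 2^{-(m+1)} a^{-m}` with `a = -ξ z_m`. This decay is polynomial in `|ξ|`,
while the prior `e^{-ξ} = e^{|ξ|} ≥ |ξ|^m / m!` grows exponentially, so the integrand in `ξ` is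
bounded below by a positive constant on the half-line `ξ ≤ -1`, which has infinite measure.
-/

open MeasureTheory Real Set
open scoped ENNReal Classical

/-- The inner integral over the scale `σ` of the Generalized Pareto posterior
integrand, for a fixed shape `ξ`, data `z` and prior `π(σ,ξ) ∝ π(ξ)/σ`:
`∫_{max(0, -ξ z_m)}^∞ σ^{-(m+1)} ∏_{i=1}^m (1 + ξ z_i/σ)^{-(1+1/ξ)} dσ`,
with the Gumbel interpretation `σ^{-(m+1)} exp(-(Σ_i z_i)/σ)` when `ξ = 0`. -/
noncomputable def gpInner (m : ℕ) (z : Fin m → ℝ) (ξ : ℝ) : ℝ≥0∞ :=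
  ∫⁻ σ in Set.Ioi (max 0 (-ξ * ⨆ i, z i)),
    ENNReal.ofReal
      (if ξ = 0 then σ ^ (-((m : ℝ) + 1)) * Real.exp (-(∑ i, z i) / σ)
       else σ ^ (-((m : ℝ) + 1)) * ∏ i, (1 + ξ * z i / σ) ^ (-(1 + 1 / ξ)))

/-- The Generalized Pareto posterior normalizing constant
`C_m(π; z) = ∫_ℝ π(ξ) ∫_{max(0,-ξ z_m)}^∞ σ^{-(m+1)} ∏_i (1+ξ z_i/σ)^{-(1+1/ξ)} dσ dξ`. -/
noncomputable def gpC (m : ℕ) (z : Fin m → ℝ) (p : ℝ → ℝ) : ℝ≥0∞ :=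
  ∫⁻ ξ : ℝ, ENNReal.ofReal (p ξ) * gpInner m z ξ

lemma lintegral_eq_top_of_const_le_on {α : Type*} [MeasurableSpace α] {μ : Measure α}
    {f : α → ℝ≥0∞} {s : Set α} {c : ℝ≥0∞} (hs : MeasurableSet s) (hμs : μ s = ∞)
    (hc : c ≠ 0) (hf : ∀ x ∈ s, c ≤ f x) : ∫⁻ x, f x ∂μ = ∞ :=
  top_unique <| calc
    ∞ = ∫⁻ _ in s, c ∂μ := by rw [setLIntegral_const, hμs, ENNReal.mul_top hc]
    _ ≤ ∫⁻ x in s, f x ∂μ := setLIntegral_mono' hs hf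
    _ ≤ ∫⁻ x, f x ∂μ := setLIntegral_le_lintegral s f

lemma one_le_one_add_mul_div_rpow {ξ x σ : ℝ} (hξ : ξ ≤ -1) (hx : 0 ≤ x)
    (hσ : -ξ * x < σ) : 1 ≤ (1 + ξ * x / σ) ^ (-(1 + 1 / ξ)) := by
  have hσ0 : 0 < σ := by nlinarith
  have hpos : 0 < 1 + ξ * x / σ := by
    have : 0 < (σ + ξ * x) / σ := div_pos (by linarith) hσ0
    rwa [add_div, div_self hσ0.ne'] at this
  have hle : 1 + ξ * x / σ ≤ 1 := by
    have : ξ * x / σ ≤ 0 := div_nonpos_of_nonpos_of_nonneg (by nlinarith) hσ0.le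
    linarith
  have hexp : -(1 + 1 / ξ) ≤ 0 := by
    have : -1 ≤ 1 / ξ := by rw [le_div_iff_of_neg (by linarith)]; linarith
    linarith
  exact Real.one_le_rpow_of_pos_of_le_one_of_nonpos hpos hle hexp

section GPInner

variable {m : ℕ} {z : Fin m → ℝ} {ξ : ℝ}

lemma inv_pow_le_gp_integrand (hξ : ξ ≤ -1) (hz : ∀ i, 0 ≤ z i) {σ : ℝ} (hσ0 : 0 ≤ σ)
    (hσ : ∀ i, -ξ * z i < σ) :
    (σ ^ (m + 1))⁻¹ ≤ σ ^ (-((m : ℝ) + 1)) * ∏ i, (1 + ξ * z i / σ) ^ (-(1 + 1 / ξ)) := by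
  have hprod : 1 ≤ ∏ i, (1 + ξ * z i / σ) ^ (-(1 + 1 / ξ)) :=
    Finset.one_le_prod fun i _ => one_le_one_add_mul_div_rpow hξ (hz i) (hσ i)
  rw [Real.rpow_neg hσ0, ← Nat.cast_add_one, Real.rpow_natCast]
  exact le_mul_of_one_le_right (by positivity) hprod

lemma ofReal_inv_le_gpInner (hξ : ξ ≤ -1) (hz : ∀ i, 0 ≤ z i) (hM : 0 < ⨆ i, z i) :
    ENNReal.ofReal ((2 ^ (m + 1) * (-ξ * ⨆ i, z i) ^ m)⁻¹) ≤ gpInner m z ξ := by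
  have hza : ∀ i, -ξ * z i ≤ -ξ * ⨆ i, z i := fun i =>
    mul_le_mul_of_nonneg_left (le_ciSup (Set.finite_range z).bddAbove i) (by linarith)
  have ha : 0 < -ξ * ⨆ i, z i := mul_pos (by linarith) hM
  generalize ha_def : -ξ * ⨆ i, z i = a at ha hza
  have hξ0 : ξ ≠ 0 := by linarith
  calc ENNReal.ofReal ((2 ^ (m + 1) * a ^ m)⁻¹)
      = ∫⁻ _ in Ioo a (2 * a), ENNReal.ofReal (((2 * a) ^ (m + 1))⁻¹) := by
        rw [setLIntegral_const, Real.volume_Ioo, ← ENNReal.ofReal_mul (by positivity)]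
        congr 1
        rw [show 2 * a - a = a by ring]
        field_simp
        ring
    _ ≤ ∫⁻ σ in Ioo a (2 * a), ENNReal.ofReal
          (σ ^ (-((m : ℝ) + 1)) * ∏ i, (1 + ξ * z i / σ) ^ (-(1 + 1 / ξ))) := by
        refine setLIntegral_mono' measurableSet_Ioo fun σ ⟨haσ, hσa⟩ => ?_
        refine ENNReal.ofReal_le_ofReal (le_trans ?_ (inv_pow_le_gp_integrand hξ hz
          (by linarith) fun i => (hza i).trans_lt haσ))
        have : 0 < σ := ha.trans haσ
        gcongr
    _ ≤ gpInner m z ξ := by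
        simp only [gpInner, if_neg hξ0, ha_def]
        exact lintegral_mono_set fun σ hσ => max_lt (ha.trans hσ.1) hσ.1

lemma ofReal_inv_le_exp_neg_mul_gpInner (hξ : ξ ≤ -1) (hz : ∀ i, 0 ≤ z i)
    (hM : 0 < ⨆ i, z i) :
    ENNReal.ofReal ((m.factorial * 2 ^ (m + 1) * (⨆ i, z i) ^ m)⁻¹) ≤
      ENNReal.ofReal (exp (-ξ)) * gpInner m z ξ := by
  set M := ⨆ i, z i
  have ht : 0 < -ξ := by linarith
  calc ENNReal.ofReal ((m.factorial * 2 ^ (m + 1) * M ^ m)⁻¹)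
      ≤ ENNReal.ofReal (exp (-ξ) * (2 ^ (m + 1) * (-ξ * M) ^ m)⁻¹) := by
        refine ENNReal.ofReal_le_ofReal ?_
        rw [mul_pow, ← div_eq_mul_inv, le_div_iff₀ (by positivity)]
        calc (m.factorial * 2 ^ (m + 1) * M ^ m)⁻¹ * (2 ^ (m + 1) * ((-ξ) ^ m * M ^ m))
            = (-ξ) ^ m / m.factorial := by field_simp
          _ ≤ exp (-ξ) := Real.pow_div_factorial_le_exp (-ξ) ht.le m
    _ ≤ ENNReal.ofReal (exp (-ξ)) * gpInner m z ξ := by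
        rw [ENNReal.ofReal_mul (exp_nonneg _)]
        gcongr
        exact ofReal_inv_le_gpInner hξ hz hM

end GPInner

theorem gp_MDI_improper
    (m : ℕ) (hm : 1 ≤ m) (z : Fin m → ℝ)
    (hzpos : ∀ i, 0 < z i) :
    gpC m z (fun ξ => Real.exp (-ξ)) = ⊤ := by
  have hz : ∀ i, 0 ≤ z i := fun i => (hzpos i).le
  have hM : 0 < ⨆ i, z i :=
    (hzpos ⟨0, hm⟩).trans_le (le_ciSup (Set.finite_range z).bddAbove _)
  refine lintegral_eq_top_of_const_le_on measurableSet_Iic volume_Iic ?_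
    fun ξ hξ => ofReal_inv_le_exp_neg_mul_gpInner hξ hz hM
  exact (ENNReal.ofReal_pos.mpr (by positivity)).ne'
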